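/- Let (Ω, μ) be a probability space, A an N×N real symmetric positive-definite matrix with smallest eigenvalue λ_min, largest eigenvalue λ_max, and condition number κ(A) = λ_max/λ_min, F : Ω → R^N Bochner integrable, and α* := ω ↦ A⁻¹F(ω). Let S be a nonempty set of Bochner-integrable functions Ω → R^N and let α̂ ∈ S be a minimizer over S of the loss L(α) = ∫_Ω |Aα(ω) − F(ω)|₂ dμ(ω). Then ‖α* − α̂‖_{L¹(Ω)} ≤ κ(A) · inf_{α ∈ S} ‖α − α*‖_{L¹(Ω)}. -/

import Mathlib

open MeasureTheory Matrix

/-- The Euclidean norm on `ℝ^N`. -/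
noncomputable def euclNorm {N : ℕ} (x : Fin N → ℝ) : ℝ := Real.sqrt (∑ i, x i ^ 2)

/-! Céa's argument. In an orthonormal eigenbasis `A` acts diagonally, which gives
`lmin |e| ≤ |A e| ≤ lmax |e|`. Since `A α* = F`, the loss is `L(α) = ∫ |A (α - α*)|`, hence
`lmin ‖α* - α̂‖ ≤ L(α̂) ≤ L(α) ≤ lmax ‖α - α*‖` for every `α ∈ S`. -/

lemma euclNorm_eq_norm_toLp {N : ℕ} (x : Fin N → ℝ) : euclNorm x = ‖WithLp.toLp 2 x‖ := by
  simp [euclNorm, EuclideanSpace.norm_eq, sq_abs]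

lemma OrthonormalBasis.sum_sq_norm_repr {ι 𝕜 E : Type*} [Fintype ι] [RCLike 𝕜]
    [NormedAddCommGroup E] [InnerProductSpace 𝕜 E] (b : OrthonormalBasis ι 𝕜 E) (x : E) :
    ∑ i, ‖b.repr x i‖ ^ 2 = ‖x‖ ^ 2 := by
  rw [← b.repr.norm_map, EuclideanSpace.norm_sq_eq]

namespace Matrix.IsHermitian
variable {𝕜 : Type*} [RCLike 𝕜] {n : Type*} [Fintype n] [DecidableEq n] {A : Matrix n n 𝕜}
  (hA : A.IsHermitian)

lemma eigenvectorBasis_repr_toEuclideanLin (x : EuclideanSpace 𝕜 n) (j : n) :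
    hA.eigenvectorBasis.repr (toEuclideanLin A x) j
      = hA.eigenvalues j * hA.eigenvectorBasis.repr x j := by
  simp only [eigenvectorBasis, eigenvalues, eigenvalues₀, OrthonormalBasis.repr_reindex]
  exact LinearMap.IsSymmetric.eigenvectorBasis_apply_self_apply _ _ _ _

lemma norm_toEuclideanLin_sq (x : EuclideanSpace 𝕜 n) :
    ‖toEuclideanLin A x‖ ^ 2
      = ∑ j, hA.eigenvalues j ^ 2 * ‖hA.eigenvectorBasis.repr x j‖ ^ 2 := by
  rw [← hA.eigenvectorBasis.repr.norm_map, EuclideanSpace.norm_sq_eq]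
  simp [eigenvectorBasis_repr_toEuclideanLin, mul_pow]

lemma mul_norm_le_norm_toEuclideanLin {a : ℝ} (ha : 0 ≤ a) (h : ∀ j, a ≤ |hA.eigenvalues j|)
    (x : EuclideanSpace 𝕜 n) : a * ‖x‖ ≤ ‖toEuclideanLin A x‖ := by
  refine le_of_pow_le_pow_left₀ two_ne_zero (norm_nonneg _) ?_
  rw [hA.norm_toEuclideanLin_sq, mul_pow, ← hA.eigenvectorBasis.sum_sq_norm_repr x, Finset.mul_sum]
  refine Finset.sum_le_sum fun j _ => mul_le_mul_of_nonneg_right ?_ (sq_nonneg _)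
  simpa only [sq_abs] using pow_le_pow_left₀ ha (h j) 2

lemma norm_toEuclideanLin_le_mul_norm {b : ℝ} (hb : 0 ≤ b) (h : ∀ j, |hA.eigenvalues j| ≤ b)
    (x : EuclideanSpace 𝕜 n) : ‖toEuclideanLin A x‖ ≤ b * ‖x‖ := by
  refine le_of_pow_le_pow_left₀ two_ne_zero (by positivity) ?_
  rw [hA.norm_toEuclideanLin_sq, mul_pow, ← hA.eigenvectorBasis.sum_sq_norm_repr x, Finset.mul_sum]
  refine Finset.sum_le_sum fun j _ => mul_le_mul_of_nonneg_right ?_ (sq_nonneg _)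
  simpa only [sq_abs] using pow_le_pow_left₀ (abs_nonneg _) (h j) 2

end Matrix.IsHermitian

section QuasiOptimality
variable {Ω E G : Type*} [MeasurableSpace Ω] {μ : Measure Ω}
  [NormedAddCommGroup E] [NormedSpace ℝ E] [NormedAddCommGroup G] [NormedSpace ℝ G]

theorem mul_integral_norm_sub_le_of_residual_le (T : E →L[ℝ] G) {m M : ℝ} (hm : 0 ≤ m)
    (hlow : ∀ e, m * ‖e‖ ≤ ‖T e‖) (hup : ∀ e, ‖T e‖ ≤ M * ‖e‖)
    {u₀ û u : Ω → E} {f : Ω → G} (hf : ∀ ω, T (u₀ ω) = f ω)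
    (hu₀ : Integrable u₀ μ) (hû : Integrable û μ) (hu : Integrable u μ)
    (hmin : ∫ ω, ‖T (û ω) - f ω‖ ∂μ ≤ ∫ ω, ‖T (u ω) - f ω‖ ∂μ) :
    m * ∫ ω, ‖u₀ ω - û ω‖ ∂μ ≤ M * ∫ ω, ‖u ω - u₀ ω‖ ∂μ := by
  simp only [← hf, ← map_sub] at hmin
  rw [← integral_const_mul, ← integral_const_mul]
  calc ∫ ω, m * ‖u₀ ω - û ω‖ ∂μ ≤ ∫ ω, ‖T (û ω - u₀ ω)‖ ∂μ :=
        integral_mono_of_nonneg (.of_forall fun ω => by positivity)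
          (T.integrable_comp (hû.sub hu₀)).norm
          (.of_forall fun ω => by dsimp only; rw [norm_sub_rev]; exact hlow _)
    _ ≤ ∫ ω, ‖T (u ω - u₀ ω)‖ ∂μ := hmin
    _ ≤ ∫ ω, M * ‖u ω - u₀ ω‖ ∂μ :=
        integral_mono_of_nonneg (.of_forall fun ω => norm_nonneg _)
          ((hu.sub hu₀).norm.const_mul M) (.of_forall fun ω => hup _)

end QuasiOptimality

theorem stmt9_general {Ω : Type*} [MeasurableSpace Ω] (μ : Measure Ω)
    {N : ℕ} (A : Matrix (Fin N) (Fin N) ℝ) (hA : A.IsHermitian) (hApd : A.PosDef)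
    (lmin lmax : ℝ)
    (hmin : IsLeast (Set.range hA.eigenvalues) lmin)
    (hmax : IsGreatest (Set.range hA.eigenvalues) lmax)
    (F : Ω → Fin N → ℝ) (hF : Integrable F μ)
    (αstar : Ω → Fin N → ℝ) (hαstar : αstar = fun ω => A⁻¹.mulVec (F ω))
    (S : Set (Ω → Fin N → ℝ)) (hSint : ∀ α ∈ S, Integrable α μ)
    (αhat : Ω → Fin N → ℝ) (hαhatmem : αhat ∈ S)
    (hαhatmin : ∀ α ∈ S, (∫ ω, euclNorm (A.mulVec (αhat ω) - F ω) ∂μ)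
        ≤ ∫ ω, euclNorm (A.mulVec (α ω) - F ω) ∂μ) :
    (∫ ω, euclNorm (αstar ω - αhat ω) ∂μ)
      ≤ (lmax / lmin) * ⨅ α : S, ∫ ω, euclNorm ((α : Ω → Fin N → ℝ) ω - αstar ω) ∂μ := by
  set T := toEuclideanCLM (n := Fin N) (𝕜 := ℝ) A
  have hpos : ∀ i, 0 < hA.eigenvalues i := hApd.eigenvalues_pos
  have hlmin : 0 < lmin := by obtain ⟨i, rfl⟩ := hmin.1; exact hpos i
  have hlmax : 0 ≤ lmax := hlmin.le.trans (hmax.2 hmin.1)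
  have hlow : ∀ x, lmin * ‖x‖ ≤ ‖T x‖ :=
    hA.mul_norm_le_norm_toEuclideanLin hlmin.le fun i => (hmin.2 ⟨i, rfl⟩).trans (le_abs_self _)
  have hup : ∀ x, ‖T x‖ ≤ lmax * ‖x‖ :=
    hA.norm_toEuclideanLin_le_mul_norm hlmax fun i =>
      (abs_of_pos (hpos i)).trans_le (hmax.2 ⟨i, rfl⟩)
  have hTαstar : ∀ ω, T (WithLp.toLp 2 (αstar ω)) = WithLp.toLp 2 (F ω) := fun ω => by
    simp [T, hαstar, mulVec_mulVec, mul_nonsing_inv _ (isUnit_iff_ne_zero.mpr hApd.det_pos.ne')]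
  have hint {g : Ω → Fin N → ℝ} (hg : Integrable g μ) :
      Integrable (fun ω => WithLp.toLp 2 (g ω)) μ :=
    (EuclideanSpace.equiv (Fin N) ℝ).symm.toContinuousLinearMap.integrable_comp hg
  have hαstar_int : Integrable αstar μ :=
    hαstar ▸ A⁻¹.mulVecLin.toContinuousLinearMap.integrable_comp hF
  have key : ∀ α ∈ S, lmin * ∫ ω, euclNorm (αstar ω - αhat ω) ∂μ
      ≤ lmax * ∫ ω, euclNorm (α ω - αstar ω) ∂μ := fun α hα => by
    have hloss := hαhatmin α hα
    simp only [euclNorm_eq_norm_toLp, WithLp.toLp_sub, ← toEuclideanCLM_toLp] at hloss ⊢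
    exact mul_integral_norm_sub_le_of_residual_le T hlmin.le hlow hup hTαstar (hint hαstar_int)
      (hint (hSint _ hαhatmem)) (hint (hSint α hα)) hloss
  have : Nonempty S := ⟨⟨αhat, hαhatmem⟩⟩
  rw [div_mul_eq_mul_div, le_div_iff₀ hlmin, Real.mul_iInf_of_nonneg hlmax, mul_comm]
  exact le_ciInf fun α => key α α.2

/-- Cea-type approximation-error lemma for the symmetric positive-definite case: if `A` is an
`N×N` real symmetric positive-definite matrix with smallest and largest eigenvalues `lmin` and
`lmax`, `F : Ω → ℝ^N` is Bochner integrable over the probability space `(Ω, μ)`,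
`α* = A⁻¹ F`, `S` is a nonempty set of integrable functions and `α̂ ∈ S` minimizes
`L(α) = ∫ |Aα(ω) − F(ω)|₂ dμ` over `S`, then
`‖α* − α̂‖_{L¹(Ω)} ≤ κ(A) inf_{α ∈ S} ‖α − α*‖_{L¹(Ω)}` with `κ(A) = lmax / lmin`. -/
theorem stmt9 {Ω : Type*} [MeasurableSpace Ω] (μ : Measure Ω) [IsProbabilityMeasure μ]
    {N : ℕ} (A : Matrix (Fin N) (Fin N) ℝ) (hA : A.IsHermitian) (hApd : A.PosDef)
    (lmin lmax : ℝ)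
    (hmin : IsLeast (Set.range hA.eigenvalues) lmin)
    (hmax : IsGreatest (Set.range hA.eigenvalues) lmax)
    (F : Ω → Fin N → ℝ) (hF : Integrable F μ)
    (αstar : Ω → Fin N → ℝ) (hαstar : αstar = fun ω => A⁻¹.mulVec (F ω))
    (S : Set (Ω → Fin N → ℝ)) (hSne : S.Nonempty) (hSint : ∀ α ∈ S, Integrable α μ)
    (αhat : Ω → Fin N → ℝ) (hαhatmem : αhat ∈ S)
    (hαhatmin : ∀ α ∈ S, (∫ ω, euclNorm (A.mulVec (αhat ω) - F ω) ∂μ)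
        ≤ ∫ ω, euclNorm (A.mulVec (α ω) - F ω) ∂μ) :
    (∫ ω, euclNorm (αstar ω - αhat ω) ∂μ)
      ≤ (lmax / lmin) * ⨅ α : S, ∫ ω, euclNorm ((α : Ω → Fin N → ℝ) ω - αstar ω) ∂μ :=
  stmt9_general μ A hA hApd lmin lmax hmin hmax F hF αstar hαstar S hSint αhat hαhatmem hαhatmin
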